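/- Let d ≥ 1 and let u ∈ L²(𝕋^d) have Fourier coefficients a : ℤ^d → ℂ with ‖u‖² = Σ_{k∈ℤ^d} |a_k|². Then Σ_{(l,s)∈ℤ^d×ℤ} |b_u(l,s)|^{d+1} ≤ 2^d · ‖u‖^{2(d+1)}. In particular there is a constant C_d > 0 (one may take C_d = 2^{d/(d+1)}) such that ‖b_u‖_{ℓ^{d+1}(ℤ^{d+1})} ≤ C_d ‖u‖²_{L²(𝕋^d)} for every u ∈ L²(𝕋^d). -/

import Mathlib

open scoped BigOperators
open Matrix

/-- The space-time Fourier coefficients of `|e^{itΔ}u|²`, where `a` are the Fourier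
coefficients of `u`: `b_u(l,s) = Σ_{k : |k-l|²-|k|² = s} a_k conj(a_{k-l})`. -/
noncomputable def bcoef {d : ℕ} (a : (Fin d → ℤ) → ℂ) (l : Fin d → ℤ) (s : ℤ) : ℂ :=
  ∑' k : Fin d → ℤ,
    if (k - l) ⬝ᵥ (k - l) - k ⬝ᵥ k = s then a k * (starRingEnd ℂ) (a (k - l)) else 0

/-!
Bound `|b(l,s)|` by `B(l,s) = Σ |a_k| |a_{k-l}|`, the sum over the `k` of phase
`|k-l|² - |k|² = s`, a hyperplane orthogonal to `l`. Expanding `B(l,s)^{d+1}` and summing over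
`s` turns the left side into the sum of `∏_j |a_{t_j}| |a_{t_j - l}|` over configurations
`(l, t_0, …, t_d)` with `(t_j - t_0) ⬝ l = 0` for all `j`. Sort these configurations by a minimal
set `T ⊆ {1, …, d}` of indices whose differences `t_i - t_0` span all the others: there are `2^d`
classes. Within a class, the tuple keeping `t_j` for `j ∈ {0} ∪ T` and `t_j - l` for the other `j`
determines the configuration, because `l` is orthogonal to the span of the `t_i - t_0` (`i ∈ T`)
and is known modulo it (if `T` is everything, these differences span `ℚ^d` and `l = 0`). The same
holds for the complementary tuple, so AM–GM `2xy ≤ x² + y²` bounds each class by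
`(Σ |a_k|²)^{d+1}`.
-/

open scoped ENNReal
open Finset Function Submodule

namespace ENNReal

variable {α β : Type*}

theorem tsum_pow_eq_tsum_prod (f : α → ℝ≥0∞) (n : ℕ) :
    (∑' a, f a) ^ n = ∑' t : Fin n → α, ∏ j, f (t j) := by
  induction n with
  | zero => simp
  | succ n ih =>
    rw [pow_succ', ih, ← ENNReal.tsum_mul_right]
    simp_rw [← ENNReal.tsum_mul_left]
    rw [← ENNReal.tsum_prod, ← (Fin.consEquiv fun _ => α).tsum_eq]
    simp [Fin.consEquiv, Fin.prod_univ_succ]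

theorem two_mul_le_add_sq (a b : ℝ≥0∞) : 2 * a * b ≤ a ^ 2 + b ^ 2 := by
  rcases eq_or_ne a ⊤ with rfl | ha
  · simp
  rcases eq_or_ne b ⊤ with rfl | hb
  · simp
  lift a to NNReal using ha
  lift b to NNReal using hb
  exact_mod_cast _root_.two_mul_le_add_sq a b

theorem tsum_mul_le_tsum_sq (F : β → ℝ≥0∞) {φ ψ : α → β} (hφ : Injective φ)
    (hψ : Injective ψ) : ∑' x, F (φ x) * F (ψ x) ≤ ∑' y, F y ^ 2 := by
  rw [← ENNReal.mul_le_mul_iff_right two_ne_zero ofNat_ne_top, ← ENNReal.tsum_mul_left, two_mul]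
  calc ∑' x, 2 * (F (φ x) * F (ψ x))
      ≤ ∑' x, (F (φ x) ^ 2 + F (ψ x) ^ 2) :=
        ENNReal.tsum_le_tsum fun x => (mul_assoc 2 _ _).symm.trans_le (two_mul_le_add_sq _ _)
    _ = ∑' x, F (φ x) ^ 2 + ∑' x, F (ψ x) ^ 2 := ENNReal.tsum_add
    _ ≤ ∑' y, F y ^ 2 + ∑' y, F y ^ 2 :=
        add_le_add (tsum_comp_le_tsum_of_injective hφ _) (tsum_comp_le_tsum_of_injective hψ _)

end ENNReal

theorem tsum_ite_forall_eq {α β : Type*} [AddCommMonoid α] [TopologicalSpace α] [DecidableEq β]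
    {n : ℕ} (g : Fin (n + 1) → β) (c : α) :
    ∑' s, (if ∀ j, g j = s then c else 0) = if ∀ j, g j = g 0 then c else 0 := by
  by_cases h : ∀ j, g j = g 0
  · have hs : ∀ s, (∀ j, g j = s) ↔ s = g 0 :=
      fun s => ⟨fun hs => (hs 0).symm, fun hs j => hs ▸ h j⟩
    rw [if_pos h, tsum_congr fun s => if_congr (hs s) rfl rfl]
    exact tsum_ite_eq (g 0) fun _ => c
  · rw [if_neg h]
    refine (tsum_congr fun s => if_neg fun hs => h fun j => (hs j).trans (hs 0).symm).trans ?_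
    exact tsum_zero

section Span

variable {K V ι : Type*} [DivisionRing K] [AddCommGroup V] [Module K V] [Fintype ι]

variable (K) in
theorem exists_minimal_spanning (v : ι → V) :
    ∃ T : Finset ι, Minimal (fun T : Finset ι => ∀ j, v j ∈ span K (v '' T)) T :=
  exists_minimal_of_wellFoundedLT _ ⟨univ, fun j => subset_span ⟨j, by simp, rfl⟩⟩

variable (K) in
noncomputable def spanningIndices (v : ι → V) : Finset ι :=
  (exists_minimal_spanning K v).choose

theorem minimal_spanningIndices (v : ι → V) :
    Minimal (fun T : Finset ι => ∀ j, v j ∈ span K (v '' T)) (spanningIndices K v) :=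
  (exists_minimal_spanning K v).choose_spec

theorem mem_span_image_spanningIndices (v : ι → V) (j : ι) :
    v j ∈ span K (v '' spanningIndices K v) :=
  (minimal_spanningIndices v).1 j

theorem span_range_eq_top_of_spanningIndices_eq_univ [DecidableEq ι] [FiniteDimensional K V]
    {v : ι → V} (hv : spanningIndices K v = univ) (hcard : Fintype.card ι = Module.finrank K V) :
    span K (Set.range v) = ⊤ := by
  refine LinearIndependent.span_eq_top_of_card_eq_finrank' ?_ hcard
  refine linearIndependent_iff_notMem_span.2 fun i hi => ?_
  have hspan : ∀ j, v j ∈ span K (v '' ↑(univ.erase i)) := by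
    intro j
    rcases eq_or_ne j i with rfl | hj
    · simpa using hi
    · exact subset_span ⟨j, by simp [hj], rfl⟩
  have hle := (minimal_spanningIndices v).2 hspan (by rw [hv]; exact erase_subset i univ)
  rw [hv] at hle
  simpa using hle (mem_univ i)

end Span

theorem Matrix.eq_of_sub_mem_span_of_dotProduct_eq_zero {K n : Type*} [Field K] [LinearOrder K]
    [IsStrictOrderedRing K] [Fintype n] [DecidableEq n] {s : Set (n → K)} {x y : n → K}
    (hx : ∀ v ∈ s, x ⬝ᵥ v = 0) (hy : ∀ v ∈ s, y ⬝ᵥ v = 0) (hxy : x - y ∈ span K s) : x = y := by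
  have hker : span K s ≤ LinearMap.ker (dotProductEquiv K n (x - y)) :=
    span_le.2 fun v hv => by simp [hx v hv, hy v hv]
  have := hker hxy
  simp only [LinearMap.mem_ker, dotProductEquiv_apply_apply] at this
  exact sub_eq_zero.1 (dotProduct_self_eq_zero.1 this)

theorem summable_and_tsum_le_of_tsum_ofReal_le {α : Type*} {f : α → ℝ} {c : ℝ}
    (hf : ∀ x, 0 ≤ f x) (hc : 0 ≤ c) (h : ∑' x, ENNReal.ofReal (f x) ≤ ENNReal.ofReal c) :
    Summable f ∧ ∑' x, f x ≤ c := by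
  have hsum : Summable f := by
    simpa [ENNReal.toReal_ofReal (hf _)] using
      ENNReal.summable_toReal (ne_top_of_le_ne_top ENNReal.ofReal_ne_top h)
  refine ⟨hsum, ?_⟩
  rwa [← ENNReal.ofReal_le_ofReal_iff hc, ENNReal.ofReal_tsum_of_nonneg hf hsum]

theorem Real.rpow_inv_natCast_le_of_le_mul_pow {x c y : ℝ} {n : ℕ} (hx : 0 ≤ x) (hc : 0 ≤ c)
    (hy : 0 ≤ y) (hn : n ≠ 0) (h : x ≤ c * y ^ n) : x ^ (n⁻¹ : ℝ) ≤ c ^ (n⁻¹ : ℝ) * y := by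
  calc x ^ (n⁻¹ : ℝ) ≤ (c * y ^ n) ^ (n⁻¹ : ℝ) := rpow_le_rpow hx h (by positivity)
    _ = c ^ (n⁻¹ : ℝ) * y := by rw [mul_rpow hc (by positivity), pow_rpow_inv_natCast hy hn]

namespace Resonance

noncomputable section

variable {d : ℕ}

def phase (k l : Fin d → ℤ) : ℤ := (k - l) ⬝ᵥ (k - l) - k ⬝ᵥ k

theorem phase_eq_phase_iff {k k' l : Fin d → ℤ} : phase k l = phase k' l ↔ (k - k') ⬝ᵥ l = 0 := by
  simp only [phase, sub_dotProduct, dotProduct_sub, dotProduct_comm l]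
  omega

abbrev Config (d : ℕ) := (Fin d → ℤ) × (Fin (d + 1) → Fin d → ℤ)

def HasConstPhase (X : Config d) : Prop := ∀ j, phase (X.2 j) X.1 = phase (X.2 0) X.1

def weight (v : (Fin d → ℤ) → ℝ≥0∞) (X : Config d) : ℝ≥0∞ :=
  ∏ j, v (X.2 j) * v (X.2 j - X.1)

def toRat (x : Fin d → ℤ) : Fin d → ℚ := fun m => x m

theorem toRat_sub (x y : Fin d → ℤ) : toRat (x - y) = toRat x - toRat y := by
  ext; simp [toRat]

theorem toRat_injective : Injective (toRat (d := d)) :=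
  fun _ _ h => funext fun m => Int.cast_injective (congrFun h m)

theorem toRat_dotProduct (x y : Fin d → ℤ) : toRat x ⬝ᵥ toRat y = ((x ⬝ᵥ y : ℤ) : ℚ) := by
  simp [toRat, dotProduct]

def diffs (X : Config d) (i : Fin d) : Fin d → ℚ := toRat (X.2 i.succ - X.2 0)

def classOf (X : Config d) : Finset (Fin d) := spanningIndices ℚ (diffs X)

theorem HasConstPhase.dotProduct_diffs {X : Config d} (hX : HasConstPhase X) (i : Fin d) :
    toRat X.1 ⬝ᵥ diffs X i = 0 := by
  rw [diffs, toRat_dotProduct, dotProduct_comm, phase_eq_phase_iff.1 (hX i.succ), Int.cast_zero]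

theorem span_diffs_eq_top {X : Config d} (hX : classOf X = univ) :
    span ℚ (Set.range (diffs X)) = ⊤ :=
  span_range_eq_top_of_spanningIndices_eq_univ hX (by simp)

/-- `fold T ∘ reflect` keeps `t j - l` on `sideA T` and `t j` elsewhere: the choice complementary
to `fold T`. -/
def reflect (X : Config d) : Config d := (-X.1, fun j => X.2 j - X.1)

theorem reflect_injective : Injective (reflect (d := d)) := by
  intro X Y h
  simp only [reflect, Prod.mk.injEq, neg_inj] at h
  refine Prod.ext h.1 (funext fun j => ?_)
  simpa [h.1] using congrFun h.2 j

theorem HasConstPhase.reflect {X : Config d} (hX : HasConstPhase X) :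
    HasConstPhase (reflect X) := fun j => by
  have := phase_eq_phase_iff.1 (hX j)
  simp [Resonance.reflect, phase_eq_phase_iff, this]

theorem diffs_reflect (X : Config d) : diffs (reflect X) = diffs X := by
  ext i : 1
  simp [diffs, reflect]

theorem classOf_reflect (X : Config d) : classOf (reflect X) = classOf X := by
  rw [classOf, classOf, diffs_reflect]

def sideA (T : Finset (Fin d)) : Finset (Fin (d + 1)) := insert 0 (T.map (Fin.succEmb d))

def fold (T : Finset (Fin d)) (X : Config d) : Fin (d + 1) → Fin d → ℤ :=
  fun j => if j ∈ sideA T then X.2 j else X.2 j - X.1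

theorem weight_eq_mul_fold (v : (Fin d → ℤ) → ℝ≥0∞) (T : Finset (Fin d)) (X : Config d) :
    weight v X = (∏ j, v (fold T X j)) * ∏ j, v (fold T (reflect X) j) := by
  rw [weight, ← prod_mul_distrib]
  refine prod_congr rfl fun j _ => ?_
  by_cases hj : j ∈ sideA T <;> simp [fold, reflect, hj, mul_comm]

theorem fold_zero_eq {T : Finset (Fin d)} {X X' : Config d} (h : fold T X = fold T X') :
    X.2 0 = X'.2 0 := by
  simpa [fold, sideA] using congrFun h 0

theorem diffs_eq_of_fold_eq {T : Finset (Fin d)} {X X' : Config d} (h : fold T X = fold T X')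
    {i : Fin d} (hi : i ∈ T) : diffs X i = diffs X' i := by
  have : X.2 i.succ = X'.2 i.succ := by simpa [fold, sideA, hi] using congrFun h i.succ
  simp [diffs, this, fold_zero_eq h]

theorem sub_mem_span_of_fold_eq {T : Finset (Fin d)} {X X' : Config d} (hX : classOf X = T)
    (hX' : classOf X' = T) (h : fold T X = fold T X') :
    toRat X.1 - toRat X'.1 ∈ span ℚ (diffs X '' T) := by
  by_cases hT : ∀ i, i ∈ T
  · obtain rfl := eq_univ_iff_forall.2 hT
    rw [coe_univ, Set.image_univ, span_diffs_eq_top hX]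
    exact mem_top
  obtain ⟨j, hj⟩ := not_forall.1 hT
  have hl : toRat X.1 - toRat X'.1 = diffs X j - diffs X' j := by
    have := congrArg toRat (by simpa [fold, sideA, hj] using congrFun h j.succ :
      X.2 j.succ - X.1 = X'.2 j.succ - X'.1)
    simp only [toRat_sub] at this
    simp only [diffs, toRat_sub, fold_zero_eq h]
    linear_combination -this
  have himage : diffs X' '' T = diffs X '' T :=
    Set.image_congr fun i hi => (diffs_eq_of_fold_eq h hi).symm
  rw [hl]
  refine sub_mem ?_ ?_
  · exact hX ▸ mem_span_image_spanningIndices (diffs X) j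
  · exact himage ▸ hX' ▸ mem_span_image_spanningIndices (diffs X') j

theorem fold_injective {T : Finset (Fin d)} {X X' : Config d} (hX : HasConstPhase X)
    (hX' : HasConstPhase X') (hc : classOf X = T) (hc' : classOf X' = T)
    (h : fold T X = fold T X') : X = X' := by
  have hl : X.1 = X'.1 := by
    refine toRat_injective <| eq_of_sub_mem_span_of_dotProduct_eq_zero ?_ ?_
      (sub_mem_span_of_fold_eq hc hc' h)
    · rintro _ ⟨i, -, rfl⟩
      exact hX.dotProduct_diffs i
    · rintro _ ⟨i, hi, rfl⟩
      rw [diffs_eq_of_fold_eq h hi]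
      exact hX'.dotProduct_diffs i
  refine Prod.ext hl (funext fun j => ?_)
  by_cases hj : j ∈ sideA T <;> simpa [fold, hj, hl] using congrFun h j

theorem tsum_tsum_pow_eq_tsum_weight (v : (Fin d → ℤ) → ℝ≥0∞) :
    ∑' ls : (Fin d → ℤ) × ℤ,
        (∑' k, if phase k ls.1 = ls.2 then v k * v (k - ls.1) else 0) ^ (d + 1) =
      ∑' X : {X : Config d | HasConstPhase X}, weight v X := by
  rw [_root_.tsum_subtype, ENNReal.tsum_prod', ENNReal.tsum_prod']
  refine tsum_congr fun l => ?_
  simp_rw [ENNReal.tsum_pow_eq_tsum_prod, Fintype.prod_ite_zero]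
  rw [ENNReal.tsum_comm]
  refine tsum_congr fun t => ?_
  convert tsum_ite_forall_eq (fun j => phase (t j) l) (weight v (l, t))
  · rfl
  · simp only [Set.indicator_apply, Set.mem_ofPred_eq, HasConstPhase]

abbrev classFiber (T : Finset (Fin d)) : Set {X : Config d | HasConstPhase X} :=
  (fun X => classOf X.1) ⁻¹' {T}

theorem tsum_weight_fiber_le (v : (Fin d → ℤ) → ℝ≥0∞) (T : Finset (Fin d)) :
    ∑' Y : classFiber T, weight v Y.1.1 ≤ (∑' k, v k ^ 2) ^ (d + 1) := by
  set F : (Fin (d + 1) → Fin d → ℤ) → ℝ≥0∞ := fun u => ∏ j, v (u j)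
  have hφ : Injective fun Y : classFiber T => fold T Y.1.1 := fun Y Y' h =>
    Subtype.ext <| Subtype.ext <| fold_injective Y.1.2 Y'.1.2 Y.2 Y'.2 h
  have hψ : Injective fun Y : classFiber T => fold T (reflect Y.1.1) := fun Y Y' h =>
    Subtype.ext <| Subtype.ext <| reflect_injective <| fold_injective Y.1.2.reflect Y'.1.2.reflect
      ((classOf_reflect _).trans Y.2) ((classOf_reflect _).trans Y'.2) h
  calc _ = ∑' Y : classFiber T, F (fold T Y.1.1) * F (fold T (reflect Y.1.1)) :=
        tsum_congr fun Y => weight_eq_mul_fold v T Y.1.1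
    _ ≤ ∑' u, F u ^ 2 := ENNReal.tsum_mul_le_tsum_sq F hφ hψ
    _ = (∑' k, v k ^ 2) ^ (d + 1) := by
        simp_rw [F, ← prod_pow]
        exact (ENNReal.tsum_pow_eq_tsum_prod (fun k => v k ^ 2) _).symm

theorem tsum_weight_le (v : (Fin d → ℤ) → ℝ≥0∞) :
    ∑' X : {X : Config d | HasConstPhase X}, weight v X ≤ 2 ^ d * (∑' k, v k ^ 2) ^ (d + 1) := by
  rw [← ENNReal.tsum_fiberwise _ fun X : {X : Config d | HasConstPhase X} => classOf X.1,
    tsum_fintype]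
  calc _ ≤ ∑ _T : Finset (Fin d), (∑' k, v k ^ 2) ^ (d + 1) :=
        sum_le_sum fun T _ => tsum_weight_fiber_le v T
    _ = 2 ^ d * (∑' k, v k ^ 2) ^ (d + 1) := by simp

theorem enorm_bcoef_le (a : (Fin d → ℤ) → ℂ) (l : Fin d → ℤ) (s : ℤ) :
    ‖bcoef a l s‖ₑ ≤ ∑' k, if phase k l = s then ‖a k‖ₑ * ‖a (k - l)‖ₑ else 0 :=
  tsum_of_enorm_bounded ENNReal.summable.hasSum fun k => by
    unfold phase
    split_ifs <;> simp

end

end Resonance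

open Resonance in
theorem tsum_bcoef_pow_le_general (d : ℕ) (a : (Fin d → ℤ) → ℂ)
    (ha : Summable fun k : Fin d → ℤ => ‖a k‖ ^ 2) :
    (Summable fun ls : (Fin d → ℤ) × ℤ => ‖bcoef a ls.1 ls.2‖ ^ (d + 1)) ∧
      (∑' ls : (Fin d → ℤ) × ℤ, ‖bcoef a ls.1 ls.2‖ ^ (d + 1)) ≤
        2 ^ d * (∑' k : Fin d → ℤ, ‖a k‖ ^ 2) ^ (d + 1) ∧
      ∃ C : ℝ, 0 < C ∧
        (∑' ls : (Fin d → ℤ) × ℤ, ‖bcoef a ls.1 ls.2‖ ^ (d + 1)) ^ ((1 : ℝ) / (d + 1)) ≤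
          C * ∑' k : Fin d → ℤ, ‖a k‖ ^ 2 := by
  set N := ∑' k, ‖a k‖ ^ 2
  have hN0 : 0 ≤ N := tsum_nonneg fun _ => by positivity
  have hN : ∑' k, ‖a k‖ₑ ^ 2 = ENNReal.ofReal N := by
    rw [ENNReal.ofReal_tsum_of_nonneg (fun _ => by positivity) ha]
    simp [ENNReal.ofReal_pow]
  have hbound : ∑' ls : (Fin d → ℤ) × ℤ, ENNReal.ofReal (‖bcoef a ls.1 ls.2‖ ^ (d + 1)) ≤
      ENNReal.ofReal (2 ^ d * N ^ (d + 1)) :=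
    calc _ = ∑' ls : (Fin d → ℤ) × ℤ, ‖bcoef a ls.1 ls.2‖ₑ ^ (d + 1) := by
          simp [ENNReal.ofReal_pow]
      _ ≤ ∑' ls : (Fin d → ℤ) × ℤ, (∑' k, if phase k ls.1 = ls.2
            then ‖a k‖ₑ * ‖a (k - ls.1)‖ₑ else 0) ^ (d + 1) :=
          ENNReal.tsum_le_tsum fun ls => pow_le_pow_left' (enorm_bcoef_le a ls.1 ls.2) _
      _ ≤ 2 ^ d * (∑' k, ‖a k‖ₑ ^ 2) ^ (d + 1) :=
          (tsum_tsum_pow_eq_tsum_weight _).trans_le (tsum_weight_le _)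
      _ = ENNReal.ofReal (2 ^ d * N ^ (d + 1)) := by
          simp [hN, ENNReal.ofReal_mul, ENNReal.ofReal_pow, hN0]
  obtain ⟨hsum, hle⟩ :=
    summable_and_tsum_le_of_tsum_ofReal_le (fun _ => by positivity) (by positivity) hbound
  have hexp : (1 : ℝ) / (d + 1) = ((d + 1 : ℕ) : ℝ)⁻¹ := by push_cast; ring
  refine ⟨hsum, hle, (2 ^ d) ^ ((1 : ℝ) / (d + 1)), by positivity, ?_⟩
  rw [hexp]
  exact Real.rpow_inv_natCast_le_of_le_mul_pow (tsum_nonneg fun _ => by positivity)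
    (by positivity) hN0 d.succ_ne_zero hle

/-- Theorem 1 (Aïssiou–Jakobson–Macià): `Σ_{(l,s)} |b_u(l,s)|^{d+1} ≤ 2^d ‖u‖^{2(d+1)}`;
in particular `‖b_u‖_{ℓ^{d+1}(ℤ^{d+1})} ≤ C_d ‖u‖²_{L²}` with `C_d = 2^{d/(d+1)}`. -/
theorem tsum_bcoef_pow_le (d : ℕ) (hd : 1 ≤ d) (a : (Fin d → ℤ) → ℂ)
    (ha : Summable fun k : Fin d → ℤ => ‖a k‖ ^ 2) :
    (Summable fun ls : (Fin d → ℤ) × ℤ => ‖bcoef a ls.1 ls.2‖ ^ (d + 1)) ∧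
      (∑' ls : (Fin d → ℤ) × ℤ, ‖bcoef a ls.1 ls.2‖ ^ (d + 1)) ≤
        2 ^ d * (∑' k : Fin d → ℤ, ‖a k‖ ^ 2) ^ (d + 1) ∧
      ∃ C : ℝ, 0 < C ∧
        (∑' ls : (Fin d → ℤ) × ℤ, ‖bcoef a ls.1 ls.2‖ ^ (d + 1)) ^ ((1 : ℝ) / (d + 1)) ≤
          C * ∑' k : Fin d → ℤ, ‖a k‖ ^ 2 :=
  tsum_bcoef_pow_le_general d a ha
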